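/- arXiv:2601.15052 — 4 statements merged into one kernel-verified Lean document; each statement's English description precedes it below -/
import Mathlib

section
/- Let q ∈ ℂ with q ≠ 0, and let ξ_x = a_0 + a_1(−1)^x + a_2(−1)^x x for complex constants a_0, a_1, a_2 with a_2 ≠ 0. Then there is no sequence (λ_x) of complex numbers with λ_x ≠ λ_y for x ≠ y (say for x, y ∈ {0,1,2,3}) satisfying (λ_x − λ_i)(ξ_x − ξ_{i+1}) = (λ_{x−1} − λ_i)(ξ_x − ξ_i) for all 1 ≤ x ≤ 3 and 0 ≤ i < x. -/
/-- Nonexistence of reduced-Leonard-pair companion eigenvalues for the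
    Bannai–Ito type sequence ξ_x = a₀ + a₁(−1)ˣ + a₂(−1)ˣ x with a₂ ≠ 0. -/
theorem no_reduced_LP_BannaiIto
    (q : ℂ) (hq : q ≠ 0)
    (a0 a1 a2 : ℂ) (ha2 : a2 ≠ 0)
    (ξ : ℕ → ℂ)
    (hξ : ∀ x : ℕ, ξ x = a0 + a1 * (-1 : ℂ) ^ x + a2 * (-1 : ℂ) ^ x * (x : ℂ)) :
    ¬ ∃ lam : ℕ → ℂ,
        (∀ x y : ℕ, x ≤ 3 → y ≤ 3 → x ≠ y → lam x ≠ lam y) ∧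
        (∀ x i : ℕ, 1 ≤ x → x ≤ 3 → i < x →
          (lam x - lam i) * (ξ x - ξ (i + 1)) = (lam (x - 1) - lam i) * (ξ x - ξ i)) := by
  rintro ⟨lam, hdist, heq⟩
  have h1 := heq 2 0 (by norm_num) (by norm_num) (by norm_num)
  have h2 := heq 3 0 (by norm_num) (by norm_num) (by norm_num)
  simp only [hξ] at h1 h2
  norm_num at h1 h2
  have key : (lam 3 - lam 1) * a2 = 0 := by linear_combination (1/2) * h1 - (1/2) * h2
  rcases mul_eq_zero.mp key with h | h
  · exact hdist 3 1 (by norm_num) (by norm_num) (by norm_num) (sub_eq_zero.mp h)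
  · exact ha2 h
end

section
/- Let q, s, α, β ∈ ℂ with q, s ≠ 0, and set ζ_i = (q^{−i} − 1/s)(1 − αβ s q^{i+1}) for integers i. Set μ_2 = s, μ_7 = 1/(αβ s) (assume αβ ≠ 0), h_{3,4} = 1/(βδ s) for some δ ≠ 0, h_{4,3} = qδ̃/(δ h_{3,4}) with δ̃ = α/(βδ), h_{8,9} = q/h_{3,4}, h_{9,8} = δ h_{3,4}/δ̃. Then for all integers i: (1/s²)(q^i − sq)(q^i − s)(αβ s q^i − 1)(αβ s q^{i+1} − 1) = (1/(μ_2 μ_7))(q^i − μ_2)(q^i − μ_7)(αβ μ_2 h_{3,4} q^i − h_{4,3})(αβ μ_7 h_{8,9} q^i − h_{9,8}). -/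
/-- The parameter choice (α̃, δ̃, μ₂, μ₇, h₃₄, s) = (α, α/(βδ), s, 1/(αβs), 1/(βδs), s)
    solves the quartic constraint arising in the classification of irreducible
    Leonard trios of q-Racah type. -/
theorem qRacah_trio_quartic_constraint
    (q s α β δ : ℂ)
    (hq : q ≠ 0) (hs : s ≠ 0) (hα : α ≠ 0) (hβ : β ≠ 0) (hδ : δ ≠ 0)
    (δt μ2 μ7 h34 h43 h89 h98 : ℂ)
    (hδt : δt = α / (β * δ))
    (hμ2 : μ2 = s) (hμ7 : μ7 = 1 / (α * β * s))
    (hh34 : h34 = 1 / (β * δ * s))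
    (hh43 : h43 = q * δt / (δ * h34))
    (hh89 : h89 = q / h34)
    (hh98 : h98 = δ * h34 / δt) :
    ∀ i : ℤ,
      (1 / s ^ 2) * (q ^ i - s * q) * (q ^ i - s) * (α * β * s * q ^ i - 1) *
          (α * β * s * q ^ (i + 1) - 1) =
        (1 / (μ2 * μ7)) * (q ^ i - μ2) * (q ^ i - μ7) *
          (α * β * μ2 * h34 * q ^ i - h43) * (α * β * μ7 * h89 * q ^ i - h98) := by
  intro i
  have hαβ : α * β ≠ 0 := mul_ne_zero hα hβ
  have e1 : h43 = q * α * s / δ := by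
    subst hδt hh34 hh43; field_simp
  have e2 : h89 = q * β * δ * s := by
    subst hh34 hh89; field_simp
  have e3 : h98 = δ / (α * s) := by
    subst hδt hh34 hh98; field_simp
  have f0 : (1:ℂ) / (μ2 * μ7) = α * β := by
    subst hμ2 hμ7; field_simp
  have f1 : q ^ i - μ7 = (1 / (α * β * s)) * (α * β * s * q ^ i - 1) := by
    subst hμ7; field_simp
  have f2 : α * β * μ2 * h34 * q ^ i - h43 = (α / δ) * (q ^ i - s * q) := by
    rw [e1, hμ2, hh34]; field_simp
  have f3 : α * β * μ7 * h89 * q ^ i - h98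
      = (δ / (α * s)) * (α * β * s * q ^ (i + 1) - 1) := by
    rw [e2, e3, hμ7, zpow_add₀ hq, zpow_one]
    field_simp
  rw [f0, f1, f2, f3, hμ2]
  field_simp
end

section
/- Let V be an (N+1)-dimensional complex vector space with basis (z_i)_{i=0}^N, and set z_{−1} = z_{N+1} = 0. Fix q ∈ ℂ with q ≠ 0 and q not a root of unity, parameters α, γ, δ ∈ ℂ with γ = q^{−N−1}. Define Z, V ∈ End(V) by Z z_i = q^{−i} z_i and V z_i = (1 − αq^i)(1 − δq^i)(1 − γq^i) z_{i−1} + γδ q^{i+1} z_i, and define v_n = ∑_{i=0}^N r_i(n) z_i where r_i(n) = (q^{−n};q)_i (γδ q^{n+1})^i / [(αq;q)_i (γq;q)_i (δq;q)_i] (assuming these denominators are nonzero for 0 ≤ i ≤ N). Then V v_n = γδ q^{n+1} v_n and Z v_n = (1 − q^{−n}) v_{n−1} + q^{−n} v_n, with the convention v_{−1} = 0. -/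
open Finset

/-- The q-Pochhammer symbol (a;q)_k = ∏_{j=0}^{k−1} (1 − a qʲ). -/
def qPoch (q a : ℂ) (k : ℕ) : ℂ := ∏ j ∈ Finset.range k, (1 - a * q ^ j)

/-- The β → 0 limit r_i(n) of the q-Racah polynomials. -/
noncomputable def rqr (q α γ δ : ℂ) (i n : ℕ) : ℂ :=
  qPoch q (q ^ (-(n : ℤ))) i * (γ * δ * q ^ (n + 1)) ^ i /
    (qPoch q (α * q) i * qPoch q (γ * q) i * qPoch q (δ * q) i)

lemma qPoch_succ (q a : ℂ) (k : ℕ) : qPoch q a (k+1) = qPoch q a k * (1 - a * q ^ k) :=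
  Finset.prod_range_succ _ _

lemma qPoch_succ' (q a : ℂ) (k : ℕ) : qPoch q a (k+1) = (1 - a) * qPoch q (a*q) k := by
  unfold qPoch
  rw [Finset.prod_range_succ']
  simp only [pow_zero, mul_one]
  rw [mul_comm]
  congr 1
  exact Finset.prod_congr rfl fun j _ => by ring

lemma qPoch_zero_of (q : ℂ) (hq : q ≠ 0) {n i : ℕ} (h : n < i) :
    qPoch q (q ^ (-(n:ℤ))) i = 0 := by
  apply Finset.prod_eq_zero (Finset.mem_range.2 h)
  have h1 : (q:ℂ) ^ (-(n:ℤ)) * q ^ n = 1 := by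
    rw [zpow_neg, zpow_natCast]; exact inv_mul_cancel₀ (pow_ne_zero _ hq)
  rw [h1]; ring

lemma rqr_zero (q α γ δ : ℂ) (hq : q ≠ 0) {i n : ℕ} (h : n < i) :
    rqr q α γ δ i n = 0 := by
  unfold rqr; rw [qPoch_zero_of q hq h, zero_mul, zero_div]

lemma rqr_rec (q α γ δ : ℂ) (hq : q ≠ 0) (i n : ℕ)
    (hα : qPoch q (α*q) (i+1) ≠ 0) (hγp : qPoch q (γ*q) (i+1) ≠ 0)
    (hδp : qPoch q (δ*q) (i+1) ≠ 0) :
    ((1 - α*q^(i+1)) * (1 - δ*q^(i+1)) * (1 - γ*q^(i+1))) * rqr q α γ δ (i+1) n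
      = (γ*δ*(q^(n+1) - q^(i+1))) * rqr q α γ δ i n := by
  rw [qPoch_succ] at hα hγp hδp
  obtain ⟨hα1, hα2⟩ := mul_ne_zero_iff.1 hα
  obtain ⟨hγ1, hγ2⟩ := mul_ne_zero_iff.1 hγp
  obtain ⟨hδ1, hδ2⟩ := mul_ne_zero_iff.1 hδp
  unfold rqr
  rw [qPoch_succ, qPoch_succ, qPoch_succ, qPoch_succ]
  have hqn : (q:ℂ)^(-(n:ℤ)) = (q^n)⁻¹ := by rw [zpow_neg, zpow_natCast]
  have hqnz : (q:ℂ)^n ≠ 0 := pow_ne_zero _ hq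
  rw [hqn]
  field_simp
  rw [div_eq_iff (mul_ne_zero (mul_ne_zero (by convert hα2 using 2; ring)
    (by convert hγ2 using 2; ring)) (by convert hδ2 using 2; ring))]
  ring

lemma rqr_diff (q α γ δ : ℂ) (hq : q ≠ 0) (i m : ℕ) :
    (q^(-(i:ℤ)) - q^(-((m+1:ℕ):ℤ))) * rqr q α γ δ i (m+1)
      = (1 - q^(-((m+1:ℕ):ℤ))) * rqr q α γ δ i m := by
  unfold rqr
  rw [mul_div_assoc', mul_div_assoc']
  congr 1
  rcases i with _ | k
  · simp [qPoch]
  · have hb : (q:ℂ)^(-((m+1:ℕ):ℤ)) * q = q^(-(m:ℤ)) := by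
      rw [show (q:ℂ)^(-((m+1:ℕ):ℤ)) * q = q^(-((m+1:ℕ):ℤ) + 1) from (zpow_add_one₀ hq _).symm]
      congr 1
      push_cast; ring
    rw [qPoch_succ' q _ k, hb, qPoch_succ]
    have e1 : (q:ℂ)^(-((m+1:ℕ):ℤ)) = (q^(m+1))⁻¹ := by rw [zpow_neg, zpow_natCast]
    have e2 : (q:ℂ)^(-(m:ℤ)) = (q^m)⁻¹ := by rw [zpow_neg, zpow_natCast]
    have e3 : (q:ℂ)^(-((k+1:ℕ):ℤ)) = (q^(k+1))⁻¹ := by rw [zpow_neg, zpow_natCast]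
    rw [e1, e2, e3]
    have h1 : (q:ℂ)^(m+1) ≠ 0 := pow_ne_zero _ hq
    have h2 : (q:ℂ)^m ≠ 0 := pow_ne_zero _ hq
    have h3 : (q:ℂ)^(k+1) ≠ 0 := pow_ne_zero _ hq
    field_simp
    ring


/-- The pair (V, Z), with Z diagonal and V upper bidiagonal in the basis (z_i),
    forms a reduced Leonard pair: V is diagonal and Z lower bidiagonal in the
    basis v_n = ∑_i r_i(n) z_i. -/
theorem reduced_leonard_pair_qRacah_limit
    (N : ℕ) (W : Type*) [AddCommGroup W] [Module ℂ W]
    (q α γ δ : ℂ)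
    (hq : q ≠ 0) (hq' : ∀ k : ℕ, k ≠ 0 → q ^ k ≠ 1)
    (hγ : γ = q ^ (-(N : ℤ) - 1))
    (hden : ∀ i : ℕ, i ≤ N →
      qPoch q (α * q) i ≠ 0 ∧ qPoch q (γ * q) i ≠ 0 ∧ qPoch q (δ * q) i ≠ 0)
    (z : ℕ → W)
    (Vop Zop : W →ₗ[ℂ] W)
    (hZ : ∀ i : ℕ, i ≤ N → Zop (z i) = (q ^ (-(i : ℤ)) : ℂ) • z i)
    (hV0 : Vop (z 0) = (γ * δ * q) • z 0)
    (hV : ∀ i : ℕ, 1 ≤ i → i ≤ N →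
      Vop (z i) = ((1 - α * q ^ i) * (1 - δ * q ^ i) * (1 - γ * q ^ i)) • z (i - 1)
        + (γ * δ * q ^ (i + 1)) • z i)
    (v : ℕ → W)
    (hv : ∀ n : ℕ, v n = ∑ i ∈ Finset.range (N + 1), rqr q α γ δ i n • z i) :
    (∀ n : ℕ, n ≤ N → Vop (v n) = (γ * δ * q ^ (n + 1)) • v n) ∧
    (Zop (v 0) = v 0) ∧
    (∀ n : ℕ, 1 ≤ n → n ≤ N →
      Zop (v n) = (1 - q ^ (-(n : ℤ))) • v (n - 1) + (q ^ (-(n : ℤ)) : ℂ) • v n) := by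
  refine ⟨?_, ?_, ?_⟩
  · -- part 1
    intro n hn
    have key : ∀ i, i < N → (γ*δ*q^(n+1)) * rqr q α γ δ i n
        = rqr q α γ δ (i+1) n * ((1 - α*q^(i+1)) * (1 - δ*q^(i+1)) * (1 - γ*q^(i+1)))
          + rqr q α γ δ i n * (γ*δ*q^(i+1)) := by
      intro i hi
      obtain ⟨h1, h2, h3⟩ := hden (i+1) (by omega)
      have h := rqr_rec q α γ δ hq i n h1 h2 h3
      linear_combination -h
    have keyN : (γ*δ*q^(n+1)) * rqr q α γ δ N n = rqr q α γ δ N n * (γ*δ*q^(N+1)) := by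
      rcases eq_or_lt_of_le hn with h | h
      · rw [h]; ring
      · rw [rqr_zero q α γ δ hq h]; ring
    rw [hv n, map_sum, Finset.smul_sum]
    have lhs_eq : ∑ i ∈ Finset.range (N + 1), Vop (rqr q α γ δ i n • z i)
        = (∑ i ∈ Finset.range N, (rqr q α γ δ (i+1) n * ((1 - α*q^(i+1)) * (1 - δ*q^(i+1)) * (1 - γ*q^(i+1)))) • z i)
          + ∑ i ∈ Finset.range (N+1), (rqr q α γ δ i n * (γ*δ*q^(i+1))) • z i := by
      rw [Finset.sum_range_succ' (fun i => Vop (rqr q α γ δ i n • z i)) N]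
      rw [Finset.sum_range_succ' (fun i => (rqr q α γ δ i n * (γ*δ*q^(i+1))) • z i) N]
      have term0 : Vop (rqr q α γ δ 0 n • z 0) = (rqr q α γ δ 0 n * (γ*δ*q^(0+1))) • z 0 := by
        rw [map_smul, hV0, smul_smul]; norm_num
      rw [term0]
      rw [← add_assoc, ← Finset.sum_add_distrib]
      congr 1
      refine Finset.sum_congr rfl fun i hi => ?_
      have hi' : i < N := Finset.mem_range.1 hi
      rw [map_smul, hV (i+1) (by omega) (by omega)]
      simp only [Nat.add_sub_cancel]
      rw [smul_add, smul_smul, smul_smul]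
    rw [lhs_eq]
    have rhs_eq : ∑ i ∈ Finset.range (N + 1), (γ*δ*q^(n+1)) • (rqr q α γ δ i n • z i)
        = (∑ i ∈ Finset.range N, (rqr q α γ δ (i+1) n * ((1 - α*q^(i+1)) * (1 - δ*q^(i+1)) * (1 - γ*q^(i+1)))) • z i)
          + ∑ i ∈ Finset.range (N+1), (rqr q α γ δ i n * (γ*δ*q^(i+1))) • z i := by
      rw [Finset.sum_range_succ (fun i => (rqr q α γ δ i n * (γ*δ*q^(i+1))) • z i) N]
      rw [Finset.sum_range_succ (fun i => (γ*δ*q^(n+1)) • (rqr q α γ δ i n • z i)) N]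
      rw [← add_assoc, ← Finset.sum_add_distrib]
      congr 1
      · refine Finset.sum_congr rfl fun i hi => ?_
        have hi' : i < N := Finset.mem_range.1 hi
        rw [smul_smul, key i hi', add_smul]
      · rw [smul_smul, keyN]
    rw [rhs_eq]
  · -- part 2
    rw [hv 0, map_sum]
    refine Finset.sum_congr rfl fun i hi => ?_
    rw [map_smul, hZ i (Nat.lt_succ_iff.mp (Finset.mem_range.1 hi))]
    rcases i with _ | k
    · norm_num
    · rw [rqr_zero q α γ δ hq (Nat.succ_pos k), zero_smul, zero_smul]
  · -- part 3
    intro n hn1 hnN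
    obtain ⟨m, rfl⟩ : ∃ m, n = m + 1 := ⟨n - 1, (Nat.succ_pred_eq_of_pos hn1).symm⟩
    have hsub : m + 1 - 1 = m := rfl
    rw [hsub, hv (m+1), hv m, map_sum, Finset.smul_sum, Finset.smul_sum,
      ← Finset.sum_add_distrib]
    refine Finset.sum_congr rfl fun i hi => ?_
    have hi' : i ≤ N := Nat.lt_succ_iff.mp (Finset.mem_range.1 hi)
    rw [map_smul, hZ i hi', smul_smul, smul_smul, smul_smul, ← add_smul]
    congr 1
    have h := rqr_diff q α γ δ hq i m
    linear_combination h
end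

section
/- Let V be a finite-dimensional complex vector space, and let Z, V ∈ End(V). Suppose there is a basis (z_i)_{i=0}^N with Z z_i = ξ_i z_i (ξ_i pairwise distinct) and V z_i = λ_i z_i + 𝒜_{i−1} z_{i−1} (upper bidiagonal, 𝒜_{i−1} ≠ 0 for 1 ≤ i ≤ N, with z_{−1} = 0 and λ_i pairwise distinct). Suppose also that the eigenvectors v_x = ∑_{i=0}^{x} ζ(x,i) z_i of V (with V v_x = λ_x v_x, ζ(x,x) ≠ 0) satisfy Z v_x = ξ_x v_x + 𝒞_x v_{x−1} with 𝒞_x ≠ 0 for 1 ≤ x ≤ N. Then for all 1 ≤ x ≤ N and 0 ≤ i ≤ x−1 with ζ(x−1,i) ≠ 0: (λ_x − λ_i)(ξ_x − ξ_{i+1}) = (λ_{x−1} − λ_i)(ξ_x − ξ_i). -/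
open Finset

/-- Compatibility condition on the eigenvalues of a reduced Leonard pair:
    the two ways of computing ζ(x, i+1) from ζ(x−1, i) agree, forcing
    (λ_x − λ_i)(ξ_x − ξ_{i+1}) = (λ_{x−1} − λ_i)(ξ_x − ξ_i). -/
theorem reduced_LP_eigenvalue_compatibility
    (N : ℕ) (W : Type*) [AddCommGroup W] [Module ℂ W] [FiniteDimensional ℂ W]
    (z v : ℤ → W)
    (hzneg : z (-1) = 0) (hvneg : v (-1) = 0)
    (hzindep : LinearIndependent ℂ (fun i : Fin (N + 1) => z (i : ℤ)))
    (Zop Vop : W →ₗ[ℂ] W)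
    (ξ lam : ℤ → ℂ) (A C : ℤ → ℂ) (ζ : ℤ → ℤ → ℂ)
    (hξdist : ∀ i j : ℤ, 0 ≤ i → i ≤ (N : ℤ) → 0 ≤ j → j ≤ (N : ℤ) → i ≠ j → ξ i ≠ ξ j)
    (hlamdist : ∀ i j : ℤ, 0 ≤ i → i ≤ (N : ℤ) → 0 ≤ j → j ≤ (N : ℤ) → i ≠ j →
      lam i ≠ lam j)
    (hZz : ∀ i : ℤ, 0 ≤ i → i ≤ (N : ℤ) → Zop (z i) = ξ i • z i)
    (hVz : ∀ i : ℤ, 0 ≤ i → i ≤ (N : ℤ) →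
      Vop (z i) = lam i • z i + A (i - 1) • z (i - 1))
    (hA : ∀ i : ℤ, 1 ≤ i → i ≤ (N : ℤ) → A (i - 1) ≠ 0)
    (hvdef : ∀ x : ℤ, 0 ≤ x → x ≤ (N : ℤ) →
      v x = ∑ i ∈ Finset.Icc (0 : ℤ) x, ζ x i • z i)
    (hζxx : ∀ x : ℤ, 0 ≤ x → x ≤ (N : ℤ) → ζ x x ≠ 0)
    (hVv : ∀ x : ℤ, 0 ≤ x → x ≤ (N : ℤ) → Vop (v x) = lam x • v x)
    (hZv : ∀ x : ℤ, 0 ≤ x → x ≤ (N : ℤ) → Zop (v x) = ξ x • v x + C x • v (x - 1))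
    (hC : ∀ x : ℤ, 1 ≤ x → x ≤ (N : ℤ) → C x ≠ 0) :
    ∀ x i : ℤ, 1 ≤ x → x ≤ (N : ℤ) → 0 ≤ i → i ≤ x - 1 → ζ (x - 1) i ≠ 0 →
      (lam x - lam i) * (ξ x - ξ (i + 1)) = (lam (x - 1) - lam i) * (ξ x - ξ i) := by
  -- A coefficient-extraction lemma from linear independence of the z's.
  have key : ∀ (c : ℤ → ℂ) (x : ℤ), 0 ≤ x → x ≤ (N : ℤ) →
      (∑ j ∈ Finset.Icc (0 : ℤ) x, c j • z j = 0) →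
      ∀ i : ℤ, 0 ≤ i → i ≤ x → c i = 0 := by
    intro c x hx0 hxN hsum i hi0 hix
    set c' : ℤ → ℂ := fun j => if j ≤ x then c j else 0 with hc'
    have hsub : Finset.Icc (0 : ℤ) x ⊆ Finset.Icc (0 : ℤ) (N : ℤ) :=
      Finset.Icc_subset_Icc_right hxN
    have hsum' : ∑ j ∈ Finset.Icc (0 : ℤ) (N : ℤ), c' j • z j = 0 := by
      rw [← Finset.sum_subset hsub]
      · rw [← hsum]
        refine Finset.sum_congr rfl fun j hj => ?_
        simp only [Finset.mem_Icc] at hj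
        simp [c', hj.2]
      · intro j hj hj'
        simp only [Finset.mem_Icc] at hj hj'
        have : ¬ j ≤ x := by omega
        simp [c', this]
    have hIcc : Finset.Icc (0 : ℤ) (N : ℤ) =
        Finset.image (fun j : Fin (N + 1) => (j : ℤ)) Finset.univ := by
      ext j
      simp only [Finset.mem_Icc, Finset.mem_image, Finset.mem_univ, true_and]
      constructor
      · rintro ⟨h0, hN⟩
        refine ⟨⟨j.toNat, by omega⟩, ?_⟩
        simp [Int.toNat_of_nonneg h0]
      · rintro ⟨k, rfl⟩
        exact ⟨Int.ofNat_nonneg _, by exact_mod_cast Nat.lt_succ_iff.mp k.isLt⟩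
    have hinj : Function.Injective (fun j : Fin (N + 1) => (j : ℤ)) := by
      intro a b hab
      exact Fin.ext (Nat.cast_injective hab)
    have hfin : ∑ j : Fin (N + 1), c' (j : ℤ) • z (j : ℤ) = 0 := by
      rw [← hsum', hIcc, Finset.sum_image (fun a _ b _ h => hinj h)]
    have hall := Fintype.linearIndependent_iff.mp hzindep (fun j : Fin (N + 1) => c' (j : ℤ))
      hfin
    have hi' : c' i = 0 := by
      have := hall ⟨i.toNat, by omega⟩
      simpa [Int.toNat_of_nonneg hi0] using this
    simpa [c', hix] using hi'
  -- Relation (1): from V v_x = λ_x v_x.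
  have rel1 : ∀ x i : ℤ, 0 ≤ x → x ≤ (N : ℤ) → 0 ≤ i → i ≤ x - 1 →
      (lam x - lam i) * ζ x i = A i * ζ x (i + 1) := by
    intro x i hx0 hxN hi0 hix
    have hmain : ∑ j ∈ Finset.Icc (0 : ℤ) x,
        ((lam j - lam x) * ζ x j + (if j ≤ x - 1 then A j * ζ x (j + 1) else 0)) • z j
        = 0 := by
      have hshift : ∑ j ∈ Finset.Icc (0 : ℤ) x,
          (if j ≤ x - 1 then A j * ζ x (j + 1) else 0) • z j
          = ∑ j ∈ Finset.Icc (0 : ℤ) x, (A (j - 1) * ζ x j) • z (j - 1) := by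
        have e1 : ∑ j ∈ Finset.Icc (0 : ℤ) x,
            (if j ≤ x - 1 then A j * ζ x (j + 1) else 0) • z j
            = ∑ j ∈ Finset.Icc (0 : ℤ) (x - 1), (A j * ζ x (j + 1)) • z j := by
          rw [← Finset.sum_subset (Finset.Icc_subset_Icc_right (by omega : x - 1 ≤ x))]
          · refine Finset.sum_congr rfl fun j hj => ?_
            simp only [Finset.mem_Icc] at hj
            simp [hj.2]
          · intro j hj hj'
            simp only [Finset.mem_Icc] at hj hj'
            have : ¬ j ≤ x - 1 := by omega
            simp [this]
        have e2 : ∑ j ∈ Finset.Icc (0 : ℤ) (x - 1), (A j * ζ x (j + 1)) • z j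
            = ∑ j ∈ Finset.Icc (-1 : ℤ) (x - 1), (A j * ζ x (j + 1)) • z j := by
          apply Finset.sum_subset (Finset.Icc_subset_Icc_left (by omega : (-1 : ℤ) ≤ 0))
          intro j hj hj'
          simp only [Finset.mem_Icc] at hj hj'
          have : j = -1 := by omega
          simp [this, hzneg]
        have e3 : ∑ j ∈ Finset.Icc (-1 : ℤ) (x - 1), (A j * ζ x (j + 1)) • z j
            = ∑ j ∈ Finset.Icc (0 : ℤ) x, (A (j - 1) * ζ x j) • z (j - 1) := by
          have hmap : Finset.Icc (-1 : ℤ) (x - 1)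
              = Finset.map (addRightEmbedding (-1)) (Finset.Icc (0 : ℤ) x) := by
            rw [Finset.map_add_right_Icc]
            congr 1 <;> ring
          rw [hmap, Finset.sum_map]
          refine Finset.sum_congr rfl fun j _ => ?_
          simp only [addRightEmbedding_apply]
          have h1 : j + (-1 : ℤ) = j - 1 := by ring
          have h3 : j - 1 + 1 = j := by ring
          rw [h1, h3]
        rw [e1, e2, e3]
      have hv : Vop (v x) - lam x • v x = ∑ j ∈ Finset.Icc (0 : ℤ) x,
          ((lam j - lam x) * ζ x j + (if j ≤ x - 1 then A j * ζ x (j + 1) else 0)) • z j := by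
        calc Vop (v x) - lam x • v x
            = ∑ j ∈ Finset.Icc (0 : ℤ) x,
              (Vop (ζ x j • z j) - lam x • (ζ x j • z j)) := by
                rw [hvdef x hx0 hxN, map_sum, Finset.smul_sum, ← Finset.sum_sub_distrib]
          _ = ∑ j ∈ Finset.Icc (0 : ℤ) x,
              (((lam j - lam x) * ζ x j) • z j + (A (j - 1) * ζ x j) • z (j - 1)) := by
                refine Finset.sum_congr rfl fun j hj => ?_
                simp only [Finset.mem_Icc] at hj
                rw [map_smul, hVz j hj.1 (le_trans hj.2 hxN)]
                module
          _ = ∑ j ∈ Finset.Icc (0 : ℤ) x, ((lam j - lam x) * ζ x j) • z j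
              + ∑ j ∈ Finset.Icc (0 : ℤ) x, (A (j - 1) * ζ x j) • z (j - 1) :=
                Finset.sum_add_distrib
          _ = ∑ j ∈ Finset.Icc (0 : ℤ) x, ((lam j - lam x) * ζ x j) • z j
              + ∑ j ∈ Finset.Icc (0 : ℤ) x,
                (if j ≤ x - 1 then A j * ζ x (j + 1) else 0) • z j := by rw [hshift]
          _ = ∑ j ∈ Finset.Icc (0 : ℤ) x,
              ((lam j - lam x) * ζ x j + (if j ≤ x - 1 then A j * ζ x (j + 1) else 0)) • z j := by
                rw [← Finset.sum_add_distrib]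
                exact Finset.sum_congr rfl fun j _ => (add_smul _ _ _).symm
      have : Vop (v x) - lam x • v x = 0 := by rw [hVv x hx0 hxN]; abel
      rw [← hv, this]
    have hc := key _ x hx0 hxN hmain i hi0 (by omega)
    have hif : (if i ≤ x - 1 then A i * ζ x (i + 1) else 0) = A i * ζ x (i + 1) := by
      simp [hix]
    rw [hif] at hc
    linear_combination -hc
  -- Relation (2): from Z v_x = ξ_x v_x + C_x v_{x-1}.
  have rel2 : ∀ x i : ℤ, 1 ≤ x → x ≤ (N : ℤ) → 0 ≤ i → i ≤ x - 1 →
      (ξ i - ξ x) * ζ x i = C x * ζ (x - 1) i := by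
    intro x i hx1 hxN hi0 hix
    have hx0 : (0 : ℤ) ≤ x := by omega
    have hmain : ∑ j ∈ Finset.Icc (0 : ℤ) x,
        ((ξ j - ξ x) * ζ x j - (if j ≤ x - 1 then C x * ζ (x - 1) j else 0)) • z j
        = 0 := by
      have hCv : C x • v (x - 1) = ∑ j ∈ Finset.Icc (0 : ℤ) x,
          (if j ≤ x - 1 then C x * ζ (x - 1) j else 0) • z j := by
        rw [hvdef (x - 1) (by omega) (by omega), Finset.smul_sum]
        rw [← Finset.sum_subset (Finset.Icc_subset_Icc_right (by omega : x - 1 ≤ x))]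
        · refine Finset.sum_congr rfl fun j hj => ?_
          simp only [Finset.mem_Icc] at hj
          simp [hj.2, smul_smul]
        · intro j hj hj'
          simp only [Finset.mem_Icc] at hj hj'
          have : ¬ j ≤ x - 1 := by omega
          simp [this]
      have hz : Zop (v x) - ξ x • v x - C x • v (x - 1) = ∑ j ∈ Finset.Icc (0 : ℤ) x,
          ((ξ j - ξ x) * ζ x j - (if j ≤ x - 1 then C x * ζ (x - 1) j else 0)) • z j := by
        rw [hCv, hvdef x hx0 hxN, map_sum, Finset.smul_sum, ← Finset.sum_sub_distrib,
          ← Finset.sum_sub_distrib]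
        refine Finset.sum_congr rfl fun j hj => ?_
        simp only [Finset.mem_Icc] at hj
        rw [map_smul, hZz j hj.1 (le_trans hj.2 hxN), sub_smul]
        congr 1
        module
      have hzero : Zop (v x) - ξ x • v x - C x • v (x - 1) = 0 := by
        rw [hZv x hx0 hxN]; abel
      rw [← hz, hzero]
    have hc := key _ x hx0 hxN hmain i hi0 (by omega)
    have hif : (if i ≤ x - 1 then C x * ζ (x - 1) i else 0) = C x * ζ (x - 1) i := by
      simp [hix]
    rw [hif] at hc
    linear_combination hc
  -- Main argument.
  intro x i hx1 hxN hi0 hix hζ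
  by_cases hcase : i = x - 1
  · subst hcase
    have h1 : x - 1 + 1 = x := by ring
    rw [h1]
    ring
  · have hix2 : i ≤ x - 2 := by omega
    have e2 := rel2 x i hx1 hxN hi0 hix
    have e2' := rel2 x (i + 1) hx1 hxN (by omega) (by omega)
    have e1 := rel1 x i (by omega) hxN hi0 hix
    have e1' := rel1 (x - 1) i (by omega) (by omega) hi0 (by omega)
    have hξne : ξ i - ξ x ≠ 0 := sub_ne_zero.mpr
      (hξdist i x hi0 (by omega) (by omega) hxN (by omega))
    have hζxi : ζ x i ≠ 0 := by
      intro h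
      rw [h, mul_zero] at e2
      exact hC x hx1 hxN (by
        rcases mul_eq_zero.mp e2.symm with h' | h'
        · exact h'
        · exact absurd h' hζ)
    have hmul : ((lam x - lam i) * (ξ x - ξ (i + 1))) * ζ x i
        = ((lam (x - 1) - lam i) * (ξ x - ξ i)) * ζ x i := by
      linear_combination (ξ x - ξ (i + 1)) * e1 - A i * e2' + C x * e1'
        + (lam (x - 1) - lam i) * e2
    exact mul_right_cancel₀ hζxi hmul
end
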